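/- Assume the final time satisfies T > π. There exists a constant C > 0 such that for every m, p ∈ ℕ, every choice of sensor points x_1,…,x_m ∈ 𝕋, and every DeepONet N with m sensor points and p trunk/branch functions, one has E_{ū∼μ}[‖G_Burg(ū) − N(ū)‖_{L¹(𝕋)}] ≥ C/p. -/

import Mathlib

open MeasureTheory Real

/-- The uniform probability measure on the interval `[a,b]`. -/
noncomputable def unif (a b : ℝ) : Measure ℝ :=
  (ENNReal.ofReal (b - a))⁻¹ • volume.restrict (Set.Icc a b)

/-- The entropy solution at time `T > 1` of the Burgers equation with initial data
`ū(x) = -sin(x - ξ)`, expressed through the inverse `Ψinv = Ψ_T⁻¹` of the characteristic map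
`Ψ_T(x₀) = x₀ - T sin x₀`: `u(x,T) = -sin(Ψinv(x - ξ + 2π))` for `x < ξ` and
`u(x,T) = -sin(Ψinv(x - ξ))` for `x ≥ ξ`, for `x ∈ [0,2π]`, `ξ ∈ [0,2π)`. -/
noncomputable def burgersSol (Ψinv : ℝ → ℝ) (ξ x : ℝ) : ℝ :=
  if x < ξ then -sin (Ψinv (x - ξ + 2 * π)) else -sin (Ψinv (x - ξ))

/-!
At time `T` the solution issued from `-sin (· - ξ)` is a Lipschitz profile translated by `ξ`, with a
single shock of height `h = 2 sin x_T` at `x = ξ`. Take `n ≍ p` shifts `ξ_j = ξ₀ + j δ`, `δ = 2π/n`,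
and integrate the difference of two consecutive solutions over the cells `[ξ_i, ξ_{i+1})`: over its
own cell it is about `-h δ`, over every other cell only `O(K δ²)`. If `p + 1` consecutive pairs
were approximated within `h δ / 2` in `L¹` by elements of the `p`-dimensional span of the trunk
functions, the `(p+1) × (p+1)` matrix of cell integrals of the approximants would be strictly
diagonally dominant (hence invertible, by Gershgorin) and of rank at most `p`. So at most `p` pairs
are well approximated, the total error along the grid is `≳ h`, and averaging over `ξ₀ ∈ [0, δ)`
gives an expected error `≳ h δ ≍ 1 / p`.
-/

open Set Function
open scoped NNReal ENNReal

theorem Matrix.exists_norm_diag_le_sum_of_rank_lt {K n : Type*} [NormedField K] [Fintype n]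
    [DecidableEq n] (A : Matrix n n K) (hA : A.rank < Fintype.card n) :
    ∃ k, ‖A k k‖ ≤ ∑ i ∈ Finset.univ.erase k, ‖A i k‖ := by
  by_contra! h
  exact hA.ne (Matrix.rank_of_det_ne_zero (det_ne_zero_of_sum_col_lt_diag h))

section SpanError

variable {ι α : Type*} [Fintype ι] [MeasurableSpace α] {μ : Measure α}

theorem sum_setIntegral_le_setIntegral {s : Set α} {I : ι → Set α}
    (hI : ∀ i, MeasurableSet (I i)) (hIs : ∀ i, I i ⊆ s) (hdisj : Pairwise (Disjoint on I))
    {g : α → ℝ} (hg : IntegrableOn g s μ) (hg0 : ∀ x, 0 ≤ g x) :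
    ∑ i, ∫ x in I i, g x ∂μ ≤ ∫ x in s, g x ∂μ := by
  rw [← integral_iUnion_fintype hI hdisj fun i => hg.mono_set (hIs i)]
  exact setIntegral_mono_set hg (ae_of_all _ hg0) (iUnion_subset hIs).eventuallyLE

theorem exists_abs_setIntegral_sum_le [DecidableEq ι] {p : ℕ} (hι : p < Fintype.card ι)
    {I : ι → Set α} {τ : Fin p → α → ℝ} (hτ : ∀ i k, IntegrableOn (τ k) (I i) μ)
    (c : ι → Fin p → ℝ) :
    ∃ j, |∫ x in I j, ∑ k, c j k * τ k x ∂μ| ≤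
      ∑ i ∈ Finset.univ.erase j, |∫ x in I i, ∑ k, c j k * τ k x ∂μ| := by
  let t : Matrix ι (Fin p) ℝ := Matrix.of fun i k => ∫ x in I i, τ k x ∂μ
  let c' : Matrix (Fin p) ι ℝ := Matrix.of fun k j => c j k
  have hM : ∀ i j, (t * c') i j = ∫ x in I i, ∑ k, c j k * τ k x ∂μ := by
    intro i j
    rw [integral_finsetSum _ fun k _ => (hτ i k).const_mul _]
    simp only [Matrix.mul_apply, t, c', Matrix.of_apply, integral_const_mul]
    exact Finset.sum_congr rfl fun k _ => mul_comm _ _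
  have hrank : (t * c').rank < Fintype.card ι :=
    ((Matrix.rank_mul_le_left _ _).trans t.rank_le_card_width).trans_lt (by simpa using hι)
  obtain ⟨j, hj⟩ := Matrix.exists_norm_diag_le_sum_of_rank_lt _ hrank
  exact ⟨j, by simpa only [hM, Real.norm_eq_abs] using hj⟩

theorem exists_sub_mul_le_integral_abs_sub_sum {p : ℕ} (hι : Fintype.card ι = p + 1)
    {s : Set α} {I : ι → Set α} (hI : ∀ i, MeasurableSet (I i)) (hIs : ∀ i, I i ⊆ s)
    (hdisj : Pairwise (Disjoint on I)) {w : ι → α → ℝ} (hw : ∀ j, IntegrableOn (w j) s μ)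
    {τ : Fin p → α → ℝ} (hτ : ∀ k, IntegrableOn (τ k) s μ) (c : ι → Fin p → ℝ) {A B : ℝ}
    (hdiag : ∀ j, A ≤ |∫ x in I j, w j x ∂μ|)
    (hoff : ∀ i j, i ≠ j → |∫ x in I i, w j x ∂μ| ≤ B) :
    ∃ j, A - p * B ≤ ∫ x in s, |w j x - ∑ k, c j k * τ k x| ∂μ := by
  classical
  set v : ι → α → ℝ := fun j x => ∑ k, c j k * τ k x
  have hv : ∀ j, IntegrableOn (v j) s μ := fun j =>
    integrable_finsetSum _ fun k _ => (hτ k).const_mul _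
  obtain ⟨j, hj⟩ := exists_abs_setIntegral_sum_le (hι ▸ p.lt_succ_self)
    (fun i k => (hτ k).mono_set (hIs i)) c
  set r : ι → ℝ := fun i => ∫ x in I i, |w j x - v j x| ∂μ
  have hwv : ∀ i, |∫ x in I i, w j x ∂μ - ∫ x in I i, v j x ∂μ| ≤ r i := fun i => by
    rw [← integral_sub ((hw j).mono_set (hIs i)) ((hv j).mono_set (hIs i))]
    exact abs_integral_le_integral_abs
  have hr : ∑ i, r i ≤ ∫ x in s, |w j x - v j x| ∂μ :=
    sum_setIntegral_le_setIntegral hI hIs hdisj ((hw j).sub (hv j)).abs fun _ => abs_nonneg _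
  have hoff' : ∀ i ∈ Finset.univ.erase j, |∫ x in I i, v j x ∂μ| ≤ B + r i := fun i hi => by
    have hwi := hoff i j (Finset.ne_of_mem_erase hi)
    have hvi := hwv i
    rw [abs_sub_comm] at hvi
    linarith [abs_sub_abs_le_abs_sub (∫ x in I i, v j x ∂μ) (∫ x in I i, w j x ∂μ)]
  have hcard : (Finset.univ.erase j).card = p := by simp [Finset.card_erase_of_mem, hι]
  refine ⟨j, ?_⟩
  calc A - p * B ≤ |∫ x in I j, v j x ∂μ| + r j - p * B := by
        linarith [hdiag j, hwv j, abs_sub_abs_le_abs_sub (∫ x in I j, w j x ∂μ)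
          (∫ x in I j, v j x ∂μ)]
    _ ≤ ∑ i ∈ Finset.univ.erase j, (B + r i) + r j - p * B := by
        gcongr; exact hj.trans (Finset.sum_le_sum hoff')
    _ = ∑ i, r i := by
        rw [Finset.sum_add_distrib, Finset.sum_const, hcard, nsmul_eq_mul,
          ← Finset.sum_erase_add _ _ (Finset.mem_univ j)]
        ring
    _ ≤ _ := hr

end SpanError

theorem mul_le_four_mul_sum_of_card_filter_le {d : ℕ → ℝ} (hd : ∀ j, 0 ≤ d j) {c : ℝ}
    (hc : 0 ≤ c) {n p : ℕ} (hn : 2 * (p + 1) ≤ n)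
    (hbad : ((Finset.range (n - 1)).filter fun j => d j + d (j + 1) < c).card ≤ p) :
    n * c ≤ 4 * ∑ j ∈ Finset.range n, d j := by
  have hsplit := Finset.card_filter_add_card_filter_not (s := Finset.range (n - 1))
    (fun j => d j + d (j + 1) < c)
  set good := (Finset.range (n - 1)).filter fun j => ¬d j + d (j + 1) < c
  have hgood : n ≤ 2 * good.card := by
    rw [Finset.card_range] at hsplit
    omega
  have hpairs : ∑ j ∈ Finset.range (n - 1), (d j + d (j + 1)) ≤ 2 * ∑ j ∈ Finset.range n, d j := by
    have hn1 : n - 1 + 1 = n := by omega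
    have hshift := Finset.sum_range_succ' d (n - 1)
    have hinit := Finset.sum_range_succ d (n - 1)
    rw [hn1] at hshift hinit
    rw [Finset.sum_add_distrib]
    linarith [hd 0, hd (n - 1)]
  calc n * c ≤ 2 * good.card * c := by gcongr; exact_mod_cast hgood
    _ ≤ 2 * ∑ j ∈ good, (d j + d (j + 1)) := by
        rw [mul_assoc, ← nsmul_eq_mul]
        gcongr
        exact Finset.card_nsmul_le_sum _ _ _ fun j hj => not_lt.mp (Finset.mem_filter.mp hj).2
    _ ≤ 2 * ∑ j ∈ Finset.range (n - 1), (d j + d (j + 1)) := by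
        gcongr
        · exact fun j _ _ => add_nonneg (hd j) (hd (j + 1))
        · exact Finset.filter_subset _ _
    _ ≤ 4 * ∑ j ∈ Finset.range n, d j := by linarith

theorem LipschitzWith.abs_sub_le_mul {F : ℝ → ℝ} {K : ℝ≥0} (hF : LipschitzWith K F) (a b : ℝ) :
    |F a - F b| ≤ K * |a - b| := by
  simpa only [Real.dist_eq] using hF.dist_le_mul a b

/-- For `ξ ∈ [0, L)`, `shiftWrap L F ξ` is, on `[0, L]`, the translate by `ξ` of the `L`-periodic
function equal to `F` on `[0, L)`. -/
noncomputable def shiftWrap (L : ℝ) (F : ℝ → ℝ) (ξ x : ℝ) : ℝ :=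
  if x < ξ then F (x - ξ + L) else F (x - ξ)

section ShiftWrap

variable {L : ℝ} {F : ℝ → ℝ} {K : ℝ≥0}

theorem shiftWrap_sub_shiftWrap_le (hF : LipschitzWith K F) {ξ ξ' x : ℝ} (hξ : ξ ≤ x)
    (hξ' : x < ξ') :
    shiftWrap L F ξ x - shiftWrap L F ξ' x ≤ F 0 - F L + K * (ξ' - ξ) := by
  have h₁ := (abs_le.mp (hF.abs_sub_le_mul (x - ξ) 0)).2
  have h₂ := (abs_le.mp (hF.abs_sub_le_mul (x - ξ' + L) L)).1
  rw [sub_zero, abs_of_nonneg (sub_nonneg.mpr hξ)] at h₁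
  rw [add_sub_cancel_right, abs_of_neg (sub_neg.mpr hξ')] at h₂
  simp only [shiftWrap, if_neg (not_lt.mpr hξ), if_pos hξ']
  linarith

theorem abs_shiftWrap_sub_shiftWrap_le (hF : LipschitzWith K F) {ξ ξ' x : ℝ}
    (h : x < ξ ↔ x < ξ') :
    |shiftWrap L F ξ x - shiftWrap L F ξ' x| ≤ K * |ξ - ξ'| := by
  by_cases hx : x < ξ
  · simpa [shiftWrap, hx, h.mp hx, abs_sub_comm ξ ξ'] using
      hF.abs_sub_le_mul (x - ξ + L) (x - ξ' + L)
  · simpa [shiftWrap, hx, mt h.mpr hx, abs_sub_comm ξ ξ'] using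
      hF.abs_sub_le_mul (x - ξ) (x - ξ')

theorem measurable_shiftWrap (hF : Measurable F) :
    Measurable fun q : ℝ × ℝ => shiftWrap L F q.1 q.2 :=
  Measurable.ite (measurableSet_lt measurable_snd measurable_fst)
    (hF.comp ((measurable_snd.sub measurable_fst).add_const L))
    (hF.comp (measurable_snd.sub measurable_fst))

theorem integrableOn_shiftWrap (hF : Continuous F) (ξ a b : ℝ) :
    IntegrableOn (shiftWrap L F ξ) (Icc a b) := by
  have h₁ : IntegrableOn (fun x => F (x - ξ + L)) (Icc a b) :=
    (hF.comp (by fun_prop)).integrableOn_Icc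
  have h₂ : IntegrableOn (fun x => F (x - ξ)) (Icc a b) :=
    (hF.comp (by fun_prop)).integrableOn_Icc
  refine (h₁.abs.add h₂.abs).mono' ?_ (ae_of_all _ fun x => ?_)
  · exact ((measurable_shiftWrap hF.measurable).comp
      (measurable_const.prodMk measurable_id)).aestronglyMeasurable
  · simp only [shiftWrap, Real.norm_eq_abs, Pi.add_apply]
    split_ifs <;> linarith [abs_nonneg (F (x - ξ + L)), abs_nonneg (F (x - ξ))]

theorem sub_mul_le_abs_setIntegral_Ico_shiftWrap_sub (hF : LipschitzWith K F) {h : ℝ}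
    (hjump : h ≤ F L - F 0) {ξ ξ' : ℝ} (hξ : ξ ≤ ξ') :
    (h - K * (ξ' - ξ)) * (ξ' - ξ) ≤
      |∫ x in Ico ξ ξ', (shiftWrap L F ξ x - shiftWrap L F ξ' x)| := by
  have hint : ∀ ξ'', IntegrableOn (shiftWrap L F ξ'') (Ico ξ ξ') := fun ξ'' =>
    (integrableOn_shiftWrap hF.continuous ξ'' ξ ξ').mono_set Ico_subset_Icc_self
  have hle : ∫ x in Ico ξ ξ', (shiftWrap L F ξ x - shiftWrap L F ξ' x) ≤
      (F 0 - F L + K * (ξ' - ξ)) * (ξ' - ξ) := by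
    calc ∫ x in Ico ξ ξ', (shiftWrap L F ξ x - shiftWrap L F ξ' x)
        ≤ ∫ _ in Ico ξ ξ', (F 0 - F L + K * (ξ' - ξ)) :=
          setIntegral_mono_on ((hint ξ).sub (hint ξ')) (by simp) measurableSet_Ico
            fun x hx => shiftWrap_sub_shiftWrap_le hF hx.1 hx.2
      _ = (F 0 - F L + K * (ξ' - ξ)) * (ξ' - ξ) := by
          rw [setIntegral_const, Real.volume_real_Ico_of_le hξ, smul_eq_mul, mul_comm]
  refine le_trans ?_ (neg_le_abs _)
  nlinarith

theorem abs_setIntegral_shiftWrap_sub_le (hF : LipschitzWith K F) {s : Set ℝ} (hs : volume s < ⊤)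
    {ξ ξ' : ℝ} (h : ∀ x ∈ s, x < ξ ↔ x < ξ') :
    |∫ x in s, (shiftWrap L F ξ x - shiftWrap L F ξ' x)| ≤ K * |ξ - ξ'| * volume.real s :=
  norm_setIntegral_le_of_norm_le_const (f := fun x => shiftWrap L F ξ x - shiftWrap L F ξ' x) hs
    fun x hx => abs_shiftWrap_sub_shiftWrap_le hF (h x hx)

end ShiftWrap

theorem lt_iff_lt_of_mem_Ico_of_ne {a δ : ℝ} (hδ : 0 < δ) {i j : ℕ} (hij : i ≠ j) {x : ℝ}
    (hx : x ∈ Ico (a + i * δ) (a + (i + 1) * δ)) : x < a + j * δ ↔ x < a + (j + 1) * δ := by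
  rcases hij.lt_or_gt with hij | hij
  · have : (i : ℝ) + 1 ≤ j := by exact_mod_cast hij
    have : x < a + j * δ := hx.2.trans_le (by gcongr)
    exact iff_of_true this (this.trans (by linarith))
  · have : (j : ℝ) + 1 ≤ i := by exact_mod_cast hij
    have : a + (j + 1) * δ ≤ x := le_trans (by gcongr) hx.1
    exact iff_of_false (by nlinarith) this.not_gt

theorem pairwise_disjoint_Ico_add_mul {a δ : ℝ} (hδ : 0 < δ) :
    Pairwise (Disjoint on fun j : ℕ => Ico (a + j * δ) (a + (j + 1) * δ)) := by
  intro i j hij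
  rw [onFun, Set.disjoint_left]
  exact fun x hxi hxj => (not_lt.mpr hxj.1) ((lt_iff_lt_of_mem_Ico_of_ne hδ hij hxi).mpr hxj.2)

section Grid

variable {L : ℝ} {F : ℝ → ℝ} {K : ℝ≥0} {h δ : ℝ} {p : ℕ}

theorem exists_mem_le_add_integral_abs_shiftWrap_sub (hF : LipschitzWith K F)
    (hjump : h ≤ F L - F 0) (hδ : 0 < δ) (hKδ : (p + 1) * (K * δ) ≤ h / 2) {ξ₀ : ℝ}
    (hξ₀ : 0 ≤ ξ₀) {S : Finset ℕ} (hS : S.card = p + 1) (hSL : ∀ j ∈ S, ξ₀ + (j + 1) * δ ≤ L)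
    {τ : Fin p → ℝ → ℝ} (hτ : ∀ k, IntegrableOn (τ k) (Icc 0 L)) (b : ℕ → Fin p → ℝ) :
    let d := fun j : ℕ => ∫ x in Icc 0 L, |shiftWrap L F (ξ₀ + j * δ) x - ∑ k, b j k * τ k x|
    ∃ j ∈ S, h * δ / 2 ≤ d j + d (j + 1) := by
  intro d
  set u := fun j : ℕ => shiftWrap L F (ξ₀ + j * δ)
  set N := fun (j : ℕ) (x : ℝ) => ∑ k, b j k * τ k x
  set I := fun j : ℕ => Ico (ξ₀ + j * δ) (ξ₀ + (j + 1) * δ)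
  have hu : ∀ j, IntegrableOn (u j) (Icc 0 L) := fun j =>
    integrableOn_shiftWrap hF.continuous _ 0 L
  have hN : ∀ j, IntegrableOn (N j) (Icc 0 L) := fun j =>
    integrable_finsetSum _ fun k _ => (hτ k).const_mul _
  have hIvol : ∀ j, volume.real (I j) = δ := fun j => by
    rw [Real.volume_real_Ico_of_le (by nlinarith)]; ring
  have hdiag : ∀ j : ℕ, (h - K * δ) * δ ≤ |∫ x in I j, (u j x - u (j + 1) x)| := fun j => by
    have := sub_mul_le_abs_setIntegral_Ico_shiftWrap_sub hF hjump
      (show ξ₀ + j * δ ≤ ξ₀ + (j + 1) * δ by nlinarith)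
    push_cast [u, I]
    rwa [show ξ₀ + (j + 1) * δ - (ξ₀ + j * δ) = δ by ring] at this
  have hoff : ∀ i j : ℕ, i ≠ j → |∫ x in I i, (u j x - u (j + 1) x)| ≤ K * δ * δ :=
    fun i j hij => by
      have := abs_setIntegral_shiftWrap_sub_le (L := L) hF (s := I i) (by simp [I])
        (ξ := ξ₀ + j * δ) (ξ' := ξ₀ + (j + 1) * δ)
        fun x hx => lt_iff_lt_of_mem_Ico_of_ne hδ hij hx
      push_cast [u]
      rwa [hIvol, show ξ₀ + j * δ - (ξ₀ + (j + 1) * δ) = -δ by ring, abs_neg,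
        abs_of_pos hδ] at this
  obtain ⟨⟨j, hjS⟩, hj⟩ := exists_sub_mul_le_integral_abs_sub_sum (ι := S) (s := Icc 0 L)
    (by simpa using hS) (I := fun i => I i) (fun _ => measurableSet_Ico)
    (fun i x hx => ⟨by nlinarith [hx.1, i.1.cast_nonneg (α := ℝ)], hx.2.le.trans (hSL i i.2)⟩)
    (fun i j hij => pairwise_disjoint_Ico_add_mul hδ (Subtype.coe_injective.ne hij))
    (w := fun j x => u j x - u (j + 1) x) (fun j => (hu j).sub (hu (j + 1))) hτ
    (fun j k => b j k - b (j + 1) k) (fun j => hdiag j) (fun i j hij => hoff i j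
      (Subtype.coe_injective.ne hij))
  refine ⟨j, hjS, ?_⟩
  have he : ∀ j, IntegrableOn (fun x => u j x - N j x) (Icc 0 L) := fun j => (hu j).sub (hN j)
  calc h * δ / 2 ≤ (h - K * δ) * δ - p * (K * δ * δ) := by nlinarith
    _ ≤ _ := hj
    _ = ∫ x in Icc 0 L, |(u j x - N j x) - (u (j + 1) x - N (j + 1) x)| := by
        refine integral_congr_ae (ae_of_all _ fun x => ?_)
        simp only [N, sub_mul, Finset.sum_sub_distrib]
        ring_nf
    _ ≤ ∫ x in Icc 0 L, (|u j x - N j x| + |u (j + 1) x - N (j + 1) x|) :=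
        integral_mono ((he j).sub (he (j + 1))).abs ((he j).abs.add (he (j + 1)).abs)
          fun x => abs_sub _ _
    _ = d j + d (j + 1) := integral_add (he j).abs (he (j + 1)).abs

theorem le_sum_integral_abs_shiftWrap_sub (hF : LipschitzWith K F) (hjump : h ≤ F L - F 0)
    (hδ : 0 < δ) (hKδ : (p + 1) * (K * δ) ≤ h / 2) {n : ℕ} (hn : 2 * (p + 1) ≤ n)
    (hnδ : n * δ = L) {ξ₀ : ℝ} (hξ₀ : ξ₀ ∈ Ico 0 δ) {τ : Fin p → ℝ → ℝ}
    (hτ : ∀ k, IntegrableOn (τ k) (Icc 0 L)) (b : ℕ → Fin p → ℝ) :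
    h * L / 8 ≤ ∑ j ∈ Finset.range n,
      ∫ x in Icc 0 L, |shiftWrap L F (ξ₀ + j * δ) x - ∑ k, b j k * τ k x| := by
  set d : ℕ → ℝ := fun j => ∫ x in Icc 0 L, |shiftWrap L F (ξ₀ + j * δ) x - ∑ k, b j k * τ k x|
  change h * L / 8 ≤ ∑ j ∈ Finset.range n, d j
  have hh : 0 ≤ h := by
    have : 0 ≤ ((p : ℝ) + 1) * (K * δ) := by positivity
    linarith
  have hbad := (Finset.card_filter_le_iff (Finset.range (n - 1))
      (fun j => d j + d (j + 1) < h * δ / 2) p).mpr fun S hS hSp => by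
    obtain ⟨S', hS'S, hS'⟩ := Finset.exists_subset_card_eq (n := p + 1) hSp
    have hS'L : ∀ j ∈ S', ξ₀ + ((j : ℝ) + 1) * δ ≤ L := fun j hj => by
      have : (j : ℝ) + 2 ≤ n := by
        have := Finset.mem_range.mp (hS (hS'S hj)); norm_cast; omega
      nlinarith [hξ₀.2]
    obtain ⟨j, hj, hjd⟩ := exists_mem_le_add_integral_abs_shiftWrap_sub hF hjump hδ hKδ hξ₀.1
      hS' hS'L hτ b
    exact ⟨j, hS'S hj, not_lt.mpr hjd⟩
  have := mul_le_four_mul_sum_of_card_filter_le (fun j => integral_nonneg fun x => abs_nonneg _)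
    (by positivity) hn hbad
  rw [← hnδ]
  linarith

end Grid

theorem setLIntegral_Ico_nat_mul_eq {E : ℝ → ℝ≥0∞} (hE : Measurable E) {δ : ℝ} (hδ : 0 ≤ δ)
    (n : ℕ) :
    ∫⁻ ξ in Ico 0 (n * δ), E ξ = ∫⁻ ξ₀ in Ico 0 δ, ∑ j ∈ Finset.range n, E (ξ₀ + j * δ) := by
  induction n with
  | zero => simp
  | succ n ih =>
    have htrans : ∫⁻ ξ in Ico (n * δ) ((n + 1) * δ), E ξ = ∫⁻ ξ₀ in Ico 0 δ, E (ξ₀ + n * δ) := by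
      rw [(measurePreserving_add_right volume _).setLIntegral_comp_emb
        (measurableEmbedding_addRight _), image_add_const_Ico]
      ring_nf
    rw [Nat.cast_succ, ← Ico_union_Ico_eq_Ico (b := n * δ) (by positivity) (by nlinarith),
      lintegral_union measurableSet_Ico Ico_disjoint_Ico_same, ih, htrans,
      ← lintegral_add_right _ (by fun_prop : Measurable fun ξ₀ => E (ξ₀ + n * δ))]
    simp_rw [Finset.sum_range_succ]

section Average

variable {L : ℝ} {F : ℝ → ℝ} {K : ℝ≥0} {h : ℝ} {p : ℕ}

theorem le_setLIntegral_lintegral_abs_shiftWrap_sub (hF : LipschitzWith K F)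
    (hjump : h ≤ F L - F 0) {δ : ℝ} (hδ : 0 < δ) (hKδ : (p + 1) * (K * δ) ≤ h / 2) {n : ℕ}
    (hn : 2 * (p + 1) ≤ n) (hnδ : n * δ = L) {b : ℝ → Fin p → ℝ} (hb : Measurable b)
    {τ : Fin p → ℝ → ℝ} (hτm : ∀ k, Measurable (τ k)) (hτ : ∀ k, IntegrableOn (τ k) (Icc 0 L)) :
    ENNReal.ofReal (h * L / 8 * δ) ≤ ∫⁻ ξ in Icc 0 L, ∫⁻ x in Icc 0 L,
      ENNReal.ofReal |shiftWrap L F ξ x - ∑ k, b ξ k * τ k x| := by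
  set E : ℝ → ℝ≥0∞ := fun ξ => ∫⁻ x in Icc 0 L,
    ENNReal.ofReal |shiftWrap L F ξ x - ∑ k, b ξ k * τ k x|
  have hE : Measurable E := by
    refine Measurable.lintegral_prod_right' (f := fun q : ℝ × ℝ =>
      ENNReal.ofReal |shiftWrap L F q.1 q.2 - ∑ k, b q.1 k * τ k q.2|) ?_
    refine ENNReal.measurable_ofReal.comp ((measurable_shiftWrap hF.continuous.measurable).sub
      (Finset.measurable_sum _ fun k _ => ?_)).abs
    exact ((measurable_pi_apply k).comp (hb.comp measurable_fst)).mul ((hτm k).comp measurable_snd)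
  have hpoint : ∀ ξ₀ ∈ Ico 0 δ,
      ENNReal.ofReal (h * L / 8) ≤ ∑ j ∈ Finset.range n, E (ξ₀ + j * δ) := fun ξ₀ hξ₀ => by
    refine (ENNReal.ofReal_le_ofReal (le_sum_integral_abs_shiftWrap_sub hF hjump hδ hKδ hn hnδ
      hξ₀ hτ fun j => b (ξ₀ + j * δ))).trans_eq ?_
    rw [ENNReal.ofReal_sum_of_nonneg fun j _ => integral_nonneg fun _ => abs_nonneg _]
    refine Finset.sum_congr rfl fun j _ =>
      ofReal_integral_eq_lintegral_ofReal ?_ (ae_of_all _ fun _ => abs_nonneg _)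
    exact ((integrableOn_shiftWrap hF.continuous _ 0 L).sub
      (integrable_finsetSum _ fun k _ => (hτ k).const_mul _)).abs
  calc ENNReal.ofReal (h * L / 8 * δ) = ∫⁻ _ in Ico 0 δ, ENNReal.ofReal (h * L / 8) := by
        rw [setLIntegral_const, Real.volume_Ico, sub_zero, ENNReal.ofReal_mul' hδ.le]
    _ ≤ ∫⁻ ξ₀ in Ico 0 δ, ∑ j ∈ Finset.range n, E (ξ₀ + j * δ) :=
        setLIntegral_mono' measurableSet_Ico hpoint
    _ = ∫⁻ ξ in Ico 0 L, E ξ := by rw [← hnδ, setLIntegral_Ico_nat_mul_eq hE hδ.le]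
    _ ≤ ∫⁻ ξ in Icc 0 L, E ξ := lintegral_mono_set Ico_subset_Icc_self

theorem exists_pos_div_le_setLIntegral_lintegral_abs_shiftWrap_sub (hL : 0 < L)
    (hF : LipschitzWith K F) (hh : 0 < h) (hjump : h ≤ F L - F 0) :
    ∃ C > 0, ∀ (p : ℕ) (b : ℝ → Fin p → ℝ), Measurable b → ∀ τ : Fin p → ℝ → ℝ,
      (∀ k, Measurable (τ k)) → (∀ k, IntegrableOn (τ k) (Icc 0 L)) →
      ENNReal.ofReal (C / p) ≤ ∫⁻ ξ in Icc 0 L, ∫⁻ x in Icc 0 L,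
        ENNReal.ofReal |shiftWrap L F ξ x - ∑ k, b ξ k * τ k x| := by
  -- With `n = M (p + 1)` shifts, `M ≥ 2` gives `2 (p + 1) ≤ n` and `M ≥ 2 K L / h` gives
  -- `(p + 1) K δ ≤ h / 2`.
  set M : ℕ := ⌈2 * K * L / h⌉₊ + 2
  have hM : 2 * K * L / h + 1 ≤ M := by
    have := Nat.le_ceil (2 * K * L / h); push_cast [M]; linarith
  have hM0 : (0 : ℝ) < M := by positivity
  refine ⟨h * L ^ 2 / (16 * M), by positivity, fun p b hb τ hτm hτ => ?_⟩
  rcases p.eq_zero_or_pos with rfl | hp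
  · simp
  have hp' : (1 : ℝ) ≤ p := by exact_mod_cast hp
  have hn : ((M * (p + 1) : ℕ) : ℝ) = M * (p + 1) := by push_cast; ring
  refine le_trans (ENNReal.ofReal_le_ofReal ?_) (le_setLIntegral_lintegral_abs_shiftWrap_sub hF
    hjump (δ := L / (M * (p + 1) : ℕ)) (by positivity) ?_ (n := M * (p + 1))
    (Nat.mul_le_mul_right _ (by omega)) (by field_simp) hb hτm hτ)
  · rw [hn, div_div, div_le_iff₀ (by positivity)]
    field_simp
    nlinarith [mul_pos (mul_pos hh (pow_pos hL 2)) hM0]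
  · rw [hn, mul_div_assoc', mul_div_assoc', div_le_div_iff₀ (by positivity) two_pos]
    rw [div_add_one hh.ne', div_le_iff₀ hh] at hM
    nlinarith

end Average

theorem Real.mul_cos_lt_sin {x : ℝ} (hx₀ : 0 < x) (hxπ : x < π) : x * cos x < sin x := by
  rcases lt_or_ge x (π / 2) with hx | hx
  · have hcos : 0 < cos x := cos_pos_of_mem_Ioo ⟨by linarith, hx⟩
    have := Real.lt_tan hx₀ hx
    rwa [tan_eq_sin_div_cos, lt_div_iff₀ hcos] at this
  · have : cos x ≤ 0 := cos_nonpos_of_pi_div_two_le_of_le hx (by linarith)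
    nlinarith [sin_pos_of_pos_of_lt_pi hx₀ hxπ]

theorem Real.cos_le_cos_of_mem_Icc {a y : ℝ} (ha : 0 ≤ a) (hy : y ∈ Icc a (2 * π - a)) :
    cos y ≤ cos a := by
  rcases le_total y π with hyπ | hyπ
  · exact cos_le_cos_of_nonneg_of_le_pi ha hyπ hy.1
  · rw [← cos_two_pi_sub y]
    exact cos_le_cos_of_nonneg_of_le_pi ha (by linarith) (by linarith [hy.2])

theorem one_sub_mul_cos_mul_sub_le {T a : ℝ} (hT : 0 ≤ T) (ha : 0 ≤ a) :
    ∀ y ∈ Icc a (2 * π - a), ∀ z ∈ Icc a (2 * π - a), y ≤ z →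
      (1 - T * cos a) * (z - y) ≤ (z - T * sin z) - (y - T * sin y) := by
  have hderiv : ∀ y, HasDerivAt (fun y => y - T * sin y) (1 - T * cos y) y := fun y =>
    (hasDerivAt_id' y).sub ((hasDerivAt_sin y).const_mul T)
  refine (convex_Icc _ _).mul_sub_le_image_sub_of_le_deriv (by fun_prop) (by fun_prop)
    fun y hy => ?_
  rw [(hderiv y).deriv]
  have := cos_le_cos_of_mem_Icc ha (interior_subset hy)
  nlinarith

section Expanding

variable {D : Set ℝ} {f : ℝ → ℝ} {c : ℝ}

theorem mul_abs_sub_le_abs_sub_of_mul_sub_le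
    (hf : ∀ y ∈ D, ∀ z ∈ D, y ≤ z → c * (z - y) ≤ f z - f y) {y z : ℝ} (hy : y ∈ D)
    (hz : z ∈ D) : c * |y - z| ≤ |f y - f z| := by
  rcases le_total y z with h | h
  · rw [abs_sub_comm, abs_of_nonneg (sub_nonneg.2 h), abs_sub_comm]
    exact (hf y hy z hz h).trans (le_abs_self _)
  · rw [abs_of_nonneg (sub_nonneg.2 h)]
    exact (hf z hz y hy h).trans (le_abs_self _)

theorem lipschitzOnWith_of_mul_sub_le (hc : 0 < c)
    (hf : ∀ y ∈ D, ∀ z ∈ D, y ≤ z → c * (z - y) ≤ f z - f y) {S : Set ℝ} {g : ℝ → ℝ}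
    (hg : MapsTo g S D) (hfg : ∀ x ∈ S, f (g x) = x) :
    LipschitzOnWith (Real.toNNReal c⁻¹) g S := by
  refine LipschitzOnWith.of_dist_le_mul fun x hx y hy => ?_
  have := mul_abs_sub_le_abs_sub_of_mul_sub_le hf (hg hx) (hg hy)
  rw [hfg x hx, hfg y hy] at this
  rw [Real.dist_eq, Real.dist_eq, Real.coe_toNNReal _ (inv_nonneg.2 hc.le), inv_mul_eq_div,
    le_div_iff₀ hc, mul_comm]
  exact this

theorem eq_of_mul_sub_le (hc : 0 < c) (hf : ∀ y ∈ D, ∀ z ∈ D, y ≤ z → c * (z - y) ≤ f z - f y)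
    {y z : ℝ} (hy : y ∈ D) (hz : z ∈ D) (h : f y = f z) : y = z := by
  have := mul_abs_sub_le_abs_sub_of_mul_sub_le hf hy hz
  rw [h, sub_self, abs_zero] at this
  exact sub_eq_zero.mp (abs_eq_zero.mp (le_antisymm (nonpos_of_mul_nonpos_right this hc)
    (abs_nonneg _)))

end Expanding

theorem exists_lipschitzWith_eqOn_neg_sin_comp {T xT : ℝ} (hxT : xT ∈ Ioo 0 π)
    (hxTeq : xT = T * sin xT) {Ψinv : ℝ → ℝ}
    (hΨinv : ∀ x ∈ Icc (0 : ℝ) (2 * π),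
      Ψinv x ∈ Icc xT (2 * π - xT) ∧ Ψinv x - T * sin (Ψinv x) = x) :
    ∃ (K : ℝ≥0) (F : ℝ → ℝ), LipschitzWith K F ∧ F (2 * π) - F 0 = 2 * sin xT ∧
      EqOn F (fun y => -sin (Ψinv y)) (Icc 0 (2 * π)) := by
  have hsin : 0 < sin xT := sin_pos_of_pos_of_lt_pi hxT.1 hxT.2
  have hT : 0 ≤ T := nonneg_of_mul_nonneg_left (hxTeq ▸ hxT.1.le) hsin
  -- `1 - T cos x_T` is the minimum of `Ψ_T'` on `[x_T, 2π - x_T]`.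
  have hc : 0 < 1 - T * cos xT := by
    have hmul : T * cos xT * sin xT < 1 * sin xT := by
      have := congrArg (· * cos xT) hxTeq
      linarith [mul_cos_lt_sin hxT.1 hxT.2]
    linarith [lt_of_mul_lt_mul_right hmul hsin.le]
  have hexp := one_sub_mul_cos_mul_sub_le hT hxT.1.le
  have hxT_mem : xT ∈ Icc xT (2 * π - xT) := ⟨le_rfl, by linarith [hxT.2]⟩
  have hxT_mem' : 2 * π - xT ∈ Icc xT (2 * π - xT) := ⟨by linarith [hxT.2], le_rfl⟩
  have h2π : (0 : ℝ) ≤ 2 * π := two_pi_pos.le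
  have hΨ₀ : Ψinv 0 = xT := eq_of_mul_sub_le hc hexp (hΨinv 0 ⟨le_rfl, h2π⟩).1 hxT_mem
    (by rw [(hΨinv 0 ⟨le_rfl, h2π⟩).2]; linarith)
  have hΨ₂π : Ψinv (2 * π) = 2 * π - xT := eq_of_mul_sub_le hc hexp
    (hΨinv _ ⟨h2π, le_rfl⟩).1 hxT_mem' (by rw [(hΨinv _ ⟨h2π, le_rfl⟩).2, sin_two_pi_sub]; linarith)
  have hlip := lipschitzOnWith_of_mul_sub_le hc hexp (fun x hx => (hΨinv x hx).1)
    fun x hx => (hΨinv x hx).2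
  refine ⟨_, fun y => -sin (IccExtend h2π (domRestrict _ Ψinv) y),
    ((lipschitzWith_sin.comp (hlip.to_restrict.comp (LipschitzWith.projIcc h2π)))).neg, ?_, ?_⟩
  · simp only [IccExtend_right, IccExtend_left, domRestrict_apply, hΨ₀, hΨ₂π, sin_two_pi_sub]
    ring
  · intro y hy
    simp only [IccExtend_of_mem _ _ hy, domRestrict_apply]

theorem burgers_deeponet_lower_bound_general
    (T : ℝ)
    (xT : ℝ) (hxT : xT ∈ Set.Ioo 0 π) (hxTeq : xT = T * sin xT)
    (Ψinv : ℝ → ℝ)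
    (hΨinv : ∀ x ∈ Set.Icc (0 : ℝ) (2 * π),
      Ψinv x ∈ Set.Icc xT (2 * π - xT) ∧ Ψinv x - T * sin (Ψinv x) = x) :
    ∃ C > (0 : ℝ), ∀ (m p : ℕ) (X : Fin m → ℝ)
      (β : (Fin m → ℝ) → Fin p → ℝ), Measurable β →
      ∀ τ : Fin p → ℝ → ℝ, (∀ k, Measurable (τ k)) →
      (∀ k, MemLp (τ k) 2 (volume.restrict (Set.Icc 0 (2 * π)))) →
      ENNReal.ofReal (C / (p : ℝ)) ≤
        ∫⁻ ξ, (∫⁻ x in Set.Icc 0 (2 * π), ENNReal.ofReal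
          |burgersSol Ψinv ξ x -
            ∑ k : Fin p, β (fun i => -sin (X i - ξ)) k * τ k x|) ∂unif 0 (2 * π) := by
  obtain ⟨K, F, hF, hjump, hFΨ⟩ := exists_lipschitzWith_eqOn_neg_sin_comp hxT hxTeq hΨinv
  obtain ⟨C, hC, hbound⟩ := exists_pos_div_le_setLIntegral_lintegral_abs_shiftWrap_sub
    two_pi_pos hF (mul_pos two_pos (sin_pos_of_pos_of_lt_pi hxT.1 hxT.2)) hjump.ge
  refine ⟨C / (2 * π), by positivity, fun m p X β hβ τ hτm hτ => ?_⟩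
  have hsol : ∀ ξ ∈ Icc 0 (2 * π), ∀ x ∈ Icc 0 (2 * π),
      burgersSol Ψinv ξ x = shiftWrap (2 * π) F ξ x := fun ξ hξ x hx => by
    unfold burgersSol shiftWrap
    split_ifs with hxξ
    · rw [hFΨ ⟨by linarith [hx.1, hξ.2], by linarith⟩]
    · rw [hFΨ ⟨by linarith, by linarith [hx.2, hξ.1]⟩]
  have hb : Measurable fun ξ => β fun i => -sin (X i - ξ) :=
    hβ.comp (measurable_pi_lambda _ fun i => by fun_prop)
  rw [unif, lintegral_smul_measure, sub_zero, div_right_comm,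
    ENNReal.ofReal_div_of_pos two_pi_pos, ENNReal.div_eq_inv_mul, smul_eq_mul]
  gcongr
  refine (hbound p _ hb τ hτm fun k => (hτ k).integrable one_le_two).trans_eq ?_
  refine setLIntegral_congr_fun measurableSet_Icc fun ξ hξ => ?_
  exact setLIntegral_congr_fun measurableSet_Icc fun x hx => by rw [hsol ξ hξ x hx]

/-- **DeepONets fail to approximate the Burgers solution operator efficiently.** Let $T > π$,
let $x_T ∈ (0,π)$ solve $x_T = T \sin x_T$ and let $Ψ\mathrm{inv}$ be the inverse of the
characteristic map $Ψ_T(x_0) = x_0 - T\sin x_0 : [x_T, 2π - x_T] → [0,2π]$, so that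
$G_{Burg}$ maps $ū = -\sin(·-ξ)$ to `burgersSol Ψinv ξ`; the input measure is the law of
$ū = -\sin(·-ξ)$, $ξ$ uniform on $[0,2π]$. There is $C > 0$ such that every DeepONet
$N(ū)(y) = Σ_{k<p} β_k(ū(x_1),…,ū(x_m)) τ_k(y)$ with $m$ sensor points and $p$ trunk/branch
functions satisfies $E_{ū∼μ}[‖G_{Burg}(ū) - N(ū)‖_{L¹(𝕋)}] ≥ C/p$. -/
theorem burgers_deeponet_lower_bound
    (T : ℝ) (hT : π < T)
    (xT : ℝ) (hxT : xT ∈ Set.Ioo 0 π) (hxTeq : xT = T * sin xT)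
    (Ψinv : ℝ → ℝ)
    (hΨinv : ∀ x ∈ Set.Icc (0 : ℝ) (2 * π),
      Ψinv x ∈ Set.Icc xT (2 * π - xT) ∧ Ψinv x - T * sin (Ψinv x) = x) :
    ∃ C > (0 : ℝ), ∀ (m p : ℕ) (X : Fin m → ℝ)
      (β : (Fin m → ℝ) → Fin p → ℝ), Measurable β →
      ∀ τ : Fin p → ℝ → ℝ, (∀ k, Measurable (τ k)) →
      (∀ k, MemLp (τ k) 2 (volume.restrict (Set.Icc 0 (2 * π)))) →
      ENNReal.ofReal (C / (p : ℝ)) ≤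
        ∫⁻ ξ, (∫⁻ x in Set.Icc 0 (2 * π), ENNReal.ofReal
          |burgersSol Ψinv ξ x -
            ∑ k : Fin p, β (fun i => -sin (X i - ξ)) k * τ k x|) ∂unif 0 (2 * π) :=
  burgers_deeponet_lower_bound_general T xT hxT hxTeq Ψinv hΨinv
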